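/- Let d ≤ e < f be integers with d + e + f = 0, and assume k ≤ e. Suppose val(β) = d, k > d, j + k > d + e, val(α·ε^k) = d + e, and val(α·γ − β·ε^j) > d + e. Then val(b − a·c) = d − k < 0. -/

import Mathlib

noncomputable section

/-- The ε-adic valuation on `L = k̄((ε))`, with `val 0 = ∞`. -/
def val {K : Type*} [Field K] (x : LaurentSeries K) : WithTop ℤ := x.orderTop

/-- The uniformizer ε of the Laurent series field. -/
def eps (K : Type*) [Field K] : LaurentSeries K := HahnSeries.single 1 1

/-- `σ : L → L` is the Frobenius automorphism: it fixes ε and raises each Laurent-series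
coefficient to the `q`-th power.  (This property determines `σ` uniquely.) -/
def IsFrobenius (K : Type*) [Field K] (q : ℕ)
    (σ : LaurentSeries K → LaurentSeries K) : Prop :=
  ∀ (x : LaurentSeries K) (n : ℤ), (σ x).coeff n = (x.coeff n) ^ q

/-!
Put `w = b - a c`. Since `σ` is a ring endomorphism preserving `val`, `β - α σ(c)` is the twisted
difference `ε^i σ(w) - ε^k w`, whose valuation is `k + val w` because `i > k`. On the other hand the
condition on `α γ - β ε^j` forces `val (α γ) > d + k`, i.e. `val c > k - e`, hence
`val (α σ(c)) > d = val β`. So `k + val w = d`.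
-/

section Valuation

variable {K : Type*} [Field K]

lemma val_mul (x y : LaurentSeries K) : val (x * y) = val x + val y :=
  HahnSeries.orderTop_mul x y

lemma val_eps_zpow (n : ℤ) : val (eps K ^ n) = n := by
  rw [val, eps, ← RatFunc.single_zpow]
  exact HahnSeries.orderTop_single one_ne_zero

lemma val_eq_top_iff {x : LaurentSeries K} : val x = ⊤ ↔ x = 0 :=
  HahnSeries.orderTop_eq_top

lemma val_sub_eq_left {x y : LaurentSeries K} (h : val x < val y) : val (x - y) = val x :=
  HahnSeries.orderTop_sub h

lemma val_sub_eq_right {x y : LaurentSeries K} (h : val y < val x) : val (x - y) = val y := by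
  rw [← neg_sub, val, HahnSeries.orderTop_neg]
  exact HahnSeries.orderTop_sub h

lemma min_val_le_val_add (x y : LaurentSeries K) : min (val x) (val y) ≤ val (x + y) :=
  HahnSeries.min_orderTop_le_orderTop_add

lemma val_eq_of_support_eq {x y : LaurentSeries K} (h : x.support = y.support) :
    val x = val y := by
  rcases eq_or_ne y 0 with rfl | hy
  · rw [HahnSeries.support_zero, HahnSeries.support_eq_empty_iff] at h
    rw [h]
  have hne := HahnSeries.support_nonempty_iff.mpr hy
  rw [val, val, HahnSeries.orderTop_of_ne_zero hy]
  exact HahnSeries.orderTop_eq_of_le (h.symm ▸ y.isWF_support.min_mem hne)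
    fun g hg => y.isWF_support.min_le hne (h ▸ hg)

lemma val_eps_zpow_mul_sub_eps_zpow_mul {σ : LaurentSeries K → LaurentSeries K}
    (hσ : ∀ x, val (σ x) = val x) {m n : ℤ} (hmn : m < n) (x : LaurentSeries K) :
    val (eps K ^ n * σ x - eps K ^ m * x) = m + val x := by
  rcases eq_or_ne x 0 with rfl | hx
  · have hσ0 : σ 0 = 0 := val_eq_top_iff.mp ((hσ 0).trans (val_eq_top_iff.mpr rfl))
    simp [hσ0, val]
  obtain ⟨v, hv⟩ := WithTop.ne_top_iff_exists.mp (mt val_eq_top_iff.mp hx)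
  rw [val_sub_eq_right, val_mul, val_eps_zpow]
  simp only [val_mul, val_eps_zpow, hσ, ← hv]
  exact_mod_cast (by omega : m + v < n + v)

lemma coe_lt_val_mul_apply_of_lt_val_sub {σ : LaurentSeries K → LaurentSeries K}
    (hσ : ∀ x, val (σ x) = val x) {α β c : LaurentSeries K} {d e j k : ℤ}
    (hjk : k < j) (hke : k ≤ e) (hvβ : val β = d) (hvα : val (α * eps K ^ k) = ↑(d + e))
    (hminor : ((d + e : ℤ) : WithTop ℤ) <
      val (α * (eps K ^ j * σ c - eps K ^ k * c) - β * eps K ^ j)) :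
    (d : WithTop ℤ) < val (α * σ c) := by
  have hαγ : ((d + k : ℤ) : WithTop ℤ) < val (α * (eps K ^ j * σ c - eps K ^ k * c)) := by
    have hβj : ((d + k : ℤ) : WithTop ℤ) < val (β * eps K ^ j) := by
      rw [val_mul, hvβ, val_eps_zpow]
      exact_mod_cast (by omega : d + k < d + j)
    have hsplit := min_val_le_val_add
      (α * (eps K ^ j * σ c - eps K ^ k * c) - β * eps K ^ j) (β * eps K ^ j)
    rw [sub_add_cancel] at hsplit
    exact (lt_min ((WithTop.coe_le_coe.mpr (by omega)).trans_lt hminor) hβj).trans_le hsplit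
  rw [val_mul, val_eps_zpow_mul_sub_eps_zpow_mul hσ hjk] at hαγ
  rw [val_mul, val_eps_zpow] at hvα
  rw [val_mul, hσ]
  generalize val α = vα at hvα hαγ ⊢
  generalize val c = vc at hαγ ⊢
  cases vα with
  | top => simp only [WithTop.top_add, WithTop.top_ne_coe] at hvα
  | coe a =>
    cases vc with
    | top => simp
    | coe m =>
      norm_cast at hvα hαγ ⊢
      omega

end Valuation

namespace IsFrobenius

variable {K : Type*} [Field K] {σ : LaurentSeries K → LaurentSeries K}

lemma support_apply {q : ℕ} (hσ : IsFrobenius K q σ) (hq : q ≠ 0) (x : LaurentSeries K) :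
    (σ x).support = x.support := by
  ext n
  rw [HahnSeries.mem_support, HahnSeries.mem_support, hσ, pow_ne_zero_iff hq]

lemma val_apply {q : ℕ} (hσ : IsFrobenius K q σ) (hq : q ≠ 0) (x : LaurentSeries K) :
    val (σ x) = val x :=
  val_eq_of_support_eq (hσ.support_apply hq x)

variable {p n : ℕ} [ExpChar K p]

lemma eq_map_iterateFrobenius (hσ : IsFrobenius K (p ^ n) σ) (x : LaurentSeries K) :
    σ x = x.map (iterateFrobenius K p n) := by
  ext m
  rw [hσ, HahnSeries.map_coeff, iterateFrobenius_def]

lemma map_sub (hσ : IsFrobenius K (p ^ n) σ) (x y : LaurentSeries K) :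
    σ (x - y) = σ x - σ y := by
  ext m
  rw [HahnSeries.coeff_sub, hσ, hσ, hσ, HahnSeries.coeff_sub, sub_pow_expChar_pow]

lemma map_mul (hσ : IsFrobenius K (p ^ n) σ) (x y : LaurentSeries K) :
    σ (x * y) = σ x * σ y := by
  simp only [hσ.eq_map_iterateFrobenius]
  exact HahnSeries.map_mul (iterateFrobenius K p n).toNonUnitalRingHom

end IsFrobenius

theorem case_d_min_k_le_e_val_b_sub_ac_general (F : Type*) [Field F] [Fintype F]
    (σ : LaurentSeries (AlgebraicClosure F) → LaurentSeries (AlgebraicClosure F))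
    (hσ : IsFrobenius (AlgebraicClosure F) (Fintype.card F) σ)
    (a b c : LaurentSeries (AlgebraicClosure F))
    (i j k : ℤ) (hij : j < i) (hjk : k < j)
    (d e : ℤ)
    (hke : k ≤ e)
    (α β γ : LaurentSeries (AlgebraicClosure F))
    (hα : α = eps (AlgebraicClosure F) ^ i * σ a - eps (AlgebraicClosure F) ^ j * a)
    (hβ : β = eps (AlgebraicClosure F) ^ i * σ b - eps (AlgebraicClosure F) ^ k * b -
      a * (eps (AlgebraicClosure F) ^ j * σ c - eps (AlgebraicClosure F) ^ k * c))
    (hγ : γ = eps (AlgebraicClosure F) ^ j * σ c - eps (AlgebraicClosure F) ^ k * c)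
    (hvβ : val β = (d : WithTop ℤ))
    (hkd : d < k)
    (hvα : val (α * eps (AlgebraicClosure F) ^ k) = ((d + e : ℤ) : WithTop ℤ))
    (hminor : ((d + e : ℤ) : WithTop ℤ) < val (α * γ - β * eps (AlgebraicClosure F) ^ j)) :
    val (b - a * c) = ((d - k : ℤ) : WithTop ℤ) ∧ d - k < 0 := by
  obtain ⟨p, _, n, hp, hcard⟩ := FiniteField.card' F
  have : Fact p.Prime := ⟨hp⟩
  have : ExpChar (AlgebraicClosure F) p :=
    expChar_of_injective_algebraMap (algebraMap F _).injective p
  rw [hcard] at hσ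
  have hval := hσ.val_apply (pow_ne_zero _ hp.ne_zero)
  have hβw : β - α * σ c = eps _ ^ i * σ (b - a * c) - eps _ ^ k * (b - a * c) := by
    rw [hβ, hα, hσ.map_sub, hσ.map_mul]
    ring
  have hαc := coe_lt_val_mul_apply_of_lt_val_sub hval hjk hke hvβ hvα (hγ ▸ hminor)
  have hkw : (k : WithTop ℤ) + val (b - a * c) = d := by
    rw [← val_eps_zpow_mul_sub_eps_zpow_mul hval (hjk.trans hij), ← hβw,
      val_sub_eq_left (hvβ ▸ hαc), hvβ]
  refine ⟨?_, by omega⟩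
  generalize val (b - a * c) = v at hkw ⊢
  cases v with
  | top => simp only [WithTop.add_top, WithTop.top_ne_coe] at hkw
  | coe v =>
    norm_cast at hkw ⊢
    omega

/-- the case `k ≤ e` for `x = ε^{(d,e,f)}s_2s_1`, `d ≤ e < f`: under the
stated valuation conditions, `val(b − ac) = d − k < 0`. -/
theorem case_d_min_k_le_e_val_b_sub_ac (F : Type*) [Field F] [Fintype F]
    (σ : LaurentSeries (AlgebraicClosure F) → LaurentSeries (AlgebraicClosure F))
    (hσ : IsFrobenius (AlgebraicClosure F) (Fintype.card F) σ)
    (a b c : LaurentSeries (AlgebraicClosure F))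
    (i j k : ℤ) (hij : j < i) (hjk : k < j) (hijk : i + j + k = 0)
    (d e f : ℤ) (hde : d ≤ e) (hef : e < f) (hdef : d + e + f = 0)
    (hke : k ≤ e)
    (α β γ : LaurentSeries (AlgebraicClosure F))
    (hα : α = eps (AlgebraicClosure F) ^ i * σ a - eps (AlgebraicClosure F) ^ j * a)
    (hβ : β = eps (AlgebraicClosure F) ^ i * σ b - eps (AlgebraicClosure F) ^ k * b -
      a * (eps (AlgebraicClosure F) ^ j * σ c - eps (AlgebraicClosure F) ^ k * c))
    (hγ : γ = eps (AlgebraicClosure F) ^ j * σ c - eps (AlgebraicClosure F) ^ k * c)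
    (hvβ : val β = (d : WithTop ℤ))
    (hkd : d < k)
    (hjkde : d + e < j + k)
    (hvα : val (α * eps (AlgebraicClosure F) ^ k) = ((d + e : ℤ) : WithTop ℤ))
    (hminor : ((d + e : ℤ) : WithTop ℤ) < val (α * γ - β * eps (AlgebraicClosure F) ^ j)) :
    val (b - a * c) = ((d - k : ℤ) : WithTop ℤ) ∧ d - k < 0 :=
  case_d_min_k_le_e_val_b_sub_ac_general F σ hσ a b c i j k hij hjk d e hke α β γ hα hβ hγ hvβ hkd
    hvα hminor
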